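/- arXiv:1804.06338 — 2 statements merged into one kernel-verified Lean document; each statement's English description precedes it below -/
import Mathlib

section
/- Let P be a smooth hypergraph property with d(P) = r, let H be a hypergraph, and let L be a list-assignment for H such that H is (P,L)-critical. Then every vertex v of H satisfies d_H(v) ≥ r·|L(v)|. -/
/-- A finite hypergraph: finite vertex set, finite edge (name) set, and an
incidence function assigning to each edge its set of endpoints (at least 2).
Edge names outside `edges` are normalized to have empty incidence. -/
structure FinHypergraph where
  verts : Finset ℕ
  edges : Finset ℕ
  inc : ℕ → Finset ℕ
  inc_sub : ∀ e ∈ edges, inc e ⊆ verts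
  two_le_inc : ∀ e ∈ edges, 2 ≤ (inc e).card
  inc_empty : ∀ e ∉ edges, inc e = ∅

namespace FinHypergraph

theorem inc_subset (H : FinHypergraph) (e : ℕ) : H.inc e ⊆ H.verts := by
  by_cases h : e ∈ H.edges
  · exact H.inc_sub e h
  · rw [H.inc_empty e h]; exact Finset.empty_subset _

/-- Degree of a vertex: number of incident edges. -/
def degree (H : FinHypergraph) (v : ℕ) : ℕ :=
  (H.edges.filter (fun e => v ∈ H.inc e)).card

/-- The set of edges incident with `v`. -/
def edgesAt (H : FinHypergraph) (v : ℕ) : Finset ℕ :=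
  H.edges.filter (fun e => v ∈ H.inc e)

/-- Degree sum `d(H)`. -/
def degSum (H : FinHypergraph) : ℕ := ∑ v ∈ H.verts, H.degree v

/-- Maximum degree `Δ(H)` (0 for the empty hypergraph). -/
def maxDegree (H : FinHypergraph) : ℕ := H.verts.sup H.degree

/-- Minimum degree `δ(H)` (0 for the empty hypergraph). -/
def minDegree (H : FinHypergraph) : ℕ :=
  if h : H.verts.Nonempty then H.verts.inf' h H.degree else 0

/-- Induced subhypergraph `H[X]`. -/
def induce (H : FinHypergraph) (X : Finset ℕ) : FinHypergraph where
  verts := X ∩ H.verts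
  edges := H.edges.filter (fun e => H.inc e ⊆ X ∩ H.verts)
  inc := fun e =>
    if e ∈ H.edges.filter (fun e => H.inc e ⊆ X ∩ H.verts) then H.inc e else ∅
  inc_sub := by
    intro e he
    simp only [if_pos he]
    exact (Finset.mem_filter.mp he).2
  two_le_inc := by
    intro e he
    simp only [if_pos he]
    exact H.two_le_inc e (Finset.mem_filter.mp he).1
  inc_empty := by
    intro e he
    simp only [if_neg he]

/-- The hypergraph `H(X)` obtained by shrinking `H` to `X`. -/
def shrink (H : FinHypergraph) (X : Finset ℕ) : FinHypergraph where
  verts := X ∩ H.verts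
  edges := H.edges.filter (fun e => 2 ≤ (H.inc e ∩ (X ∩ H.verts)).card)
  inc := fun e =>
    if e ∈ H.edges.filter (fun e => 2 ≤ (H.inc e ∩ (X ∩ H.verts)).card) then
      H.inc e ∩ (X ∩ H.verts) else ∅
  inc_sub := by
    intro e he
    simp only [if_pos he]
    exact Finset.inter_subset_right
  two_le_inc := by
    intro e he
    simp only [if_pos he]
    exact (Finset.mem_filter.mp he).2
  inc_empty := by
    intro e he
    simp only [if_neg he]

/-- `H - v`. -/
def deleteVert (H : FinHypergraph) (v : ℕ) : FinHypergraph := H.induce (H.verts.erase v)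

/-- The empty hypergraph `K_0`. -/
def emptyHG : FinHypergraph :=
  ⟨∅, ∅, fun _ => ∅, fun e he => absurd he (Finset.notMem_empty e),
    fun e he => absurd he (Finset.notMem_empty e), fun _ _ => rfl⟩

/-- The one-vertex edgeless hypergraph `K_1` on vertex `v`. -/
def singleHG (v : ℕ) : FinHypergraph :=
  ⟨{v}, ∅, fun _ => ∅, fun e he => absurd he (Finset.notMem_empty e),
    fun e he => absurd he (Finset.notMem_empty e), fun _ _ => rfl⟩

/-- FinHypergraph isomorphism. -/
def Iso (H₁ H₂ : FinHypergraph) : Prop :=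
  ∃ φ ψ : ℕ → ℕ, Set.BijOn φ ↑H₁.verts ↑H₂.verts ∧ Set.BijOn ψ ↑H₁.edges ↑H₂.edges ∧
    ∀ e ∈ H₁.edges, H₂.inc (ψ e) = (H₁.inc e).image φ

/-- A class of hypergraphs closed under isomorphism. -/
def IsoClosed (P : Set FinHypergraph) : Prop :=
  ∀ H₁ H₂ : FinHypergraph, Iso H₁ H₂ → H₁ ∈ P → H₂ ∈ P

/-- Hereditary: closed under induced subhypergraphs. -/
def Hereditary (P : Set FinHypergraph) : Prop :=
  ∀ H ∈ P, ∀ X : Finset ℕ, H.induce X ∈ P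

/-- A smooth hypergraph property: isomorphism-closed, hereditary and non-trivial. -/
def Smooth (P : Set FinHypergraph) : Prop :=
  IsoClosed P ∧ Hereditary P ∧ (∃ H ∈ P, H.verts.Nonempty) ∧ (∃ H : FinHypergraph, H ∉ P)

/-- `F(P)`: hypergraphs not in `P` all of whose vertex-deleted subhypergraphs are in `P`. -/
def critFam (P : Set FinHypergraph) : Set FinHypergraph :=
  {H : FinHypergraph | H ∉ P ∧ ∀ v ∈ H.verts, H.deleteVert v ∈ P}

/-- `d(P) = min {δ(G) : G ∈ F(P)}`. -/
noncomputable def dP (P : Set FinHypergraph) : ℕ := sInf (minDegree '' critFam P)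

/-- Disjoint union of two hypergraphs. -/
def disjUnion (H₁ H₂ : FinHypergraph) : FinHypergraph where
  verts := H₁.verts ∪ H₂.verts
  edges := H₁.edges ∪ H₂.edges
  inc := fun e => H₁.inc e ∪ H₂.inc e
  inc_sub := fun e _ => Finset.union_subset_union (H₁.inc_subset e) (H₂.inc_subset e)
  two_le_inc := by
    intro e he
    rcases Finset.mem_union.mp he with h | h
    · exact le_trans (H₁.two_le_inc e h) (Finset.card_le_card Finset.subset_union_left)
    · exact le_trans (H₂.two_le_inc e h) (Finset.card_le_card Finset.subset_union_right)
  inc_empty := by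
    intro e he
    rw [Finset.mem_union] at he
    push_neg at he
    simp only [H₁.inc_empty e he.1, H₂.inc_empty e he.2, Finset.empty_union]

/-- Additive: closed under vertex-disjoint unions. -/
def Additive (P : Set FinHypergraph) : Prop :=
  ∀ H₁ H₂ : FinHypergraph, H₁ ∈ P → H₂ ∈ P → Disjoint H₁.verts H₂.verts →
    Disjoint H₁.edges H₂.edges → disjUnion H₁ H₂ ∈ P

/-- A `(P,L)`-coloring exists: an `L`-coloring each of whose color classes induces
a hypergraph in `P`. -/
def ColorableWith (P : Set FinHypergraph) (H : FinHypergraph) (L : ℕ → Finset ℕ) : Prop :=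
  ∃ φ : ℕ → ℕ, (∀ v ∈ H.verts, φ v ∈ L v) ∧
    ∀ c : ℕ, H.induce (H.verts.filter (fun v => φ v = c)) ∈ P

/-- `H` is `(P,L)`-critical. -/
def Critical (P : Set FinHypergraph) (H : FinHypergraph) (L : ℕ → Finset ℕ) : Prop :=
  ¬ ColorableWith P H L ∧ ∀ v ∈ H.verts, ColorableWith P (H.deleteVert v) L

/-- The `P`-list-chromatic number `χ^ℓ(H : P)`. -/
noncomputable def listChrom (P : Set FinHypergraph) (H : FinHypergraph) : ℕ :=
  sInf {k : ℕ | ∀ L : ℕ → Finset ℕ, (∀ v ∈ H.verts, k ≤ (L v).card) → ColorableWith P H L}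

/-- The `P`-chromatic number `χ(H : P)`. -/
noncomputable def chrom (P : Set FinHypergraph) (H : FinHypergraph) : ℕ :=
  sInf {k : ℕ | ∃ φ : ℕ → ℕ, (∀ v ∈ H.verts, φ v ∈ Finset.range k) ∧
    ∀ c : ℕ, H.induce (H.verts.filter (fun v => φ v = c)) ∈ P}

/-- `(χ^ℓ, P)`-critical: every proper induced subhypergraph has strictly smaller
`P`-list-chromatic number. -/
def ListCritical (P : Set FinHypergraph) (H : FinHypergraph) : Prop :=
  ∀ X : Finset ℕ, X ⊂ H.verts → listChrom P (H.induce X) < listChrom P H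

/-- Two vertices lie in a common edge. -/
def Adj (H : FinHypergraph) (u v : ℕ) : Prop := ∃ e ∈ H.edges, u ∈ H.inc e ∧ v ∈ H.inc e

/-- Connectedness via hyperpaths. -/
def Connected (H : FinHypergraph) : Prop :=
  H.verts.Nonempty ∧ ∀ u ∈ H.verts, ∀ v ∈ H.verts, Relation.ReflTransGen H.Adj u v

/-- `v` is a separating vertex of `H`. -/
def IsSepVert (H : FinHypergraph) (v : ℕ) : Prop :=
  ∃ X Y : Finset ℕ, X ∪ Y = H.verts ∧ X ∩ Y = {v} ∧ 2 ≤ X.card ∧ 2 ≤ Y.card ∧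
    ∀ e ∈ H.edges, H.inc e ⊆ X ∨ H.inc e ⊆ Y

/-- `B` is a block of `H`: a maximal connected induced subhypergraph without
separating vertices. -/
def IsBlock (H B : FinHypergraph) : Prop :=
  ∃ X ⊆ H.verts, B = H.induce X ∧ B.Connected ∧ (∀ v : ℕ, ¬ B.IsSepVert v) ∧
    ∀ Y : Finset ℕ, X ⊂ Y → Y ⊆ H.verts →
      ¬ ((H.induce Y).Connected ∧ ∀ v : ℕ, ¬ (H.induce Y).IsSepVert v)

/-- Multiplicity of the pair `u, v`. -/
def mult (H : FinHypergraph) (u v : ℕ) : ℕ :=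
  (H.edges.filter (fun e => H.inc e = {u, v})).card

/-- `H = tK_n`: the complete graph on `n` vertices with each edge of multiplicity `t`. -/
def IsTK (H : FinHypergraph) (t n : ℕ) : Prop :=
  H.verts.card = n ∧
    (∀ e ∈ H.edges, ∃ u ∈ H.verts, ∃ v ∈ H.verts, u ≠ v ∧ H.inc e = {u, v}) ∧
    ∀ u ∈ H.verts, ∀ v ∈ H.verts, u ≠ v → H.mult u v = t

/-- `H = tC_n`: the cycle on `n` vertices (ordinary edges) with each edge of
multiplicity `t`. -/
def IsTC (H : FinHypergraph) (t n : ℕ) : Prop :=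
  3 ≤ n ∧ ∃ f : ℕ → ℕ, Set.InjOn f (Set.Iio n) ∧
    H.verts = (Finset.range n).image f ∧
    (∀ e ∈ H.edges, ∃ i < n, H.inc e = {f i, f ((i + 1) % n)}) ∧
    ∀ i < n, (H.edges.filter (fun e => H.inc e = {f i, f ((i + 1) % n)})).card = t

/-- A brick: `tC_n` with `n ≥ 3` odd, or `tK_n`. -/
def IsBrick (H : FinHypergraph) : Prop :=
  (∃ t ≥ 1, ∃ n : ℕ, 3 ≤ n ∧ Odd n ∧ IsTC H t n) ∨ (∃ t ≥ 1, ∃ n ≥ 1, IsTK H t n)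

/-- `r`-regular. -/
def IsRegular (H : FinHypergraph) (r : ℕ) : Prop := ∀ v ∈ H.verts, H.degree v = r

/-- Simple: no parallel edges. -/
def Simple (H : FinHypergraph) : Prop :=
  ∀ e ∈ H.edges, ∀ e' ∈ H.edges, e ≠ e' → H.inc e ≠ H.inc e'

/-- The set `V(H, P, L)` of low vertices (for `d(P) = r`). -/
def lowVerts (H : FinHypergraph) (L : ℕ → Finset ℕ) (r : ℕ) : Finset ℕ :=
  H.verts.filter (fun v => H.degree v = r * (L v).card)

end FinHypergraph

open FinHypergraph

/-!
Fix `v` and a `(P,L)`-colouring `φ` of `H - v`. For each `c ∈ L v`, colouring `v` with `c` must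
fail, so `v` together with the class `φ⁻¹(c)` induces a hypergraph outside `P`; a minimal vertex set
containing `v` with this property induces a member of `F(P)`, in which `v` has degree at least
`d(P)`. Those edges at `v` lie inside `{v} ∪ φ⁻¹(c)` and meet `φ⁻¹(c)`, so they are disjoint for
distinct colours, and summing over `L v` gives `r * |L v| ≤ d_H(v)`.
-/

open Finset

namespace FinHypergraph

section Induce

variable (H : FinHypergraph)

@[ext]
lemma ext {H₁ H₂ : FinHypergraph} (hv : H₁.verts = H₂.verts) (he : H₁.edges = H₂.edges)
    (hi : H₁.inc = H₂.inc) : H₁ = H₂ := by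
  cases H₁; cases H₂; simp_all

lemma exists_mem_inc_ne {e : ℕ} (he : e ∈ H.edges) (v : ℕ) : ∃ u ∈ H.inc e, u ≠ v :=
  exists_mem_ne (one_lt_two.trans_le (H.two_le_inc e he)) v

@[simp]
lemma induce_verts (X : Finset ℕ) : (H.induce X).verts = X ∩ H.verts := rfl

@[simp]
lemma mem_induce_edges {X : Finset ℕ} {e : ℕ} :
    e ∈ (H.induce X).edges ↔ e ∈ H.edges ∧ H.inc e ⊆ X := by
  simp [induce, subset_inter_iff, H.inc_subset e]

lemma induce_inc (X : Finset ℕ) (e : ℕ) :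
    (H.induce X).inc e = if H.inc e ⊆ X then H.inc e else ∅ := by
  by_cases he : e ∈ H.edges
  · simp [induce, subset_inter_iff, H.inc_subset e, he]
  · simp [induce, he, H.inc_empty e he]

lemma induce_induce (X Y : Finset ℕ) : (H.induce Y).induce X = H.induce (X ∩ Y) := by
  ext1
  · simp [inter_assoc]
  · ext e
    simp only [mem_induce_edges, induce_inc, subset_inter_iff]
    split_ifs <;> simp_all
  · funext e
    simp only [induce_inc, subset_inter_iff]
    split_ifs <;> simp_all

lemma deleteVert_verts (v : ℕ) : (H.deleteVert v).verts = H.verts.erase v :=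
  inter_eq_left.2 (erase_subset _ _)

lemma deleteVert_induce (X : Finset ℕ) (u : ℕ) :
    (H.induce X).deleteVert u = H.induce ((X ∩ H.verts).erase u) := by
  rw [deleteVert, induce_induce, induce_verts,
    inter_eq_left.2 ((erase_subset _ _).trans inter_subset_left)]

lemma induce_filter_deleteVert (v : ℕ) (p : ℕ → Prop) [DecidablePred p] :
    (H.deleteVert v).induce {u ∈ H.verts.erase v | p u}
      = H.induce {u ∈ H.verts.erase v | p u} := by
  rw [deleteVert, induce_induce, inter_eq_left.2 (filter_subset _ _)]

lemma degree_induce (X : Finset ℕ) (v : ℕ) :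
    (H.induce X).degree v = #{e ∈ H.edgesAt v | H.inc e ⊆ X} := by
  rw [degree, edgesAt, filter_filter]
  congr 1
  ext e
  simp only [mem_filter, mem_induce_edges, induce_inc]
  split_ifs <;> simp_all

lemma minDegree_le_degree {v : ℕ} (hv : v ∈ H.verts) : H.minDegree ≤ H.degree v := by
  rw [minDegree, dif_pos ⟨v, hv⟩]
  exact inf'_le _ hv

end Induce

lemma Hereditary.induce_mem_of_subset {P : Set FinHypergraph} (hP : Hereditary P)
    {H : FinHypergraph} {X Y : Finset ℕ} (hY : H.induce Y ∈ P) (hXY : X ⊆ Y) :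
    H.induce X ∈ P := by
  simpa [induce_induce, inter_eq_left.2 hXY] using hP _ hY X

lemma dP_le_degree {P : Set FinHypergraph} {G : FinHypergraph} (hG : G ∈ critFam P) {v : ℕ}
    (hv : v ∈ G.verts) : dP P ≤ G.degree v :=
  (Nat.sInf_le (Set.mem_image_of_mem minDegree hG)).trans (G.minDegree_le_degree hv)

lemma Hereditary.exists_induce_mem_critFam {P : Set FinHypergraph} (hP : Hereditary P)
    {H : FinHypergraph} {v : ℕ} {Y : Finset ℕ} (hv : v ∈ H.verts) (hvY : v ∈ Y)
    (hYv : H.induce (Y.erase v) ∈ P) (hY : H.induce Y ∉ P) :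
    ∃ X ⊆ Y, v ∈ X ∧ H.induce X ∈ critFam P := by
  obtain ⟨X, hXY, ⟨hvX, hX⟩, hmin⟩ :=
    exists_minimal_le_of_wellFoundedLT (fun X => v ∈ X ∧ H.induce X ∉ P) Y ⟨hvY, hY⟩
  refine ⟨X, hXY, hvX, hX, fun u hu => ?_⟩
  rw [deleteVert_induce]
  obtain rfl | huv := eq_or_ne u v
  · exact hP.induce_mem_of_subset hYv (erase_subset_erase _ (inter_subset_left.trans hXY))
  · by_contra hXu
    have hsub : (X ∩ H.verts).erase u ⊆ X := (erase_subset _ _).trans inter_subset_left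
    have hvXu : v ∈ (X ∩ H.verts).erase u := mem_erase.2 ⟨huv.symm, mem_inter.2 ⟨hvX, hv⟩⟩
    exact notMem_erase u _ (hmin ⟨hvXu, hXu⟩ hsub (mem_inter.1 hu).1)

lemma sum_card_edgesAt_subset_insert_le_degree (H : FinHypergraph) (v : ℕ) {s : Finset ℕ}
    {S : ℕ → Finset ℕ} (hS : (s : Set ℕ).PairwiseDisjoint S) :
    ∑ c ∈ s, #{e ∈ H.edgesAt v | H.inc e ⊆ insert v (S c)} ≤ H.degree v := by
  rw [← card_biUnion]
  · exact card_le_card (biUnion_subset.2 fun c _ => filter_subset _ _)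
  · intro c hc c' hc' hcc'
    refine disjoint_filter.2 fun e he hec hec' => ?_
    obtain ⟨u, hu, huv⟩ := H.exists_mem_inc_ne (mem_filter.1 he).1 v
    exact disjoint_left.1 (hS hc hc' hcc') ((mem_insert.1 (hec hu)).resolve_left huv)
      ((mem_insert.1 (hec' hu)).resolve_left huv)

lemma colorableWith_of_update {P : Set FinHypergraph} {H : FinHypergraph} {L : ℕ → Finset ℕ}
    {v : ℕ} (hv : v ∈ H.verts) {φ : ℕ → ℕ} (hφL : ∀ u ∈ H.verts.erase v, φ u ∈ L u)
    (hφP : ∀ d, H.induce {u ∈ H.verts.erase v | φ u = d} ∈ P) {c : ℕ} (hc : c ∈ L v)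
    (hvc : H.induce (insert v {u ∈ H.verts.erase v | φ u = c}) ∈ P) :
    ColorableWith P H L := by
  refine ⟨Function.update φ v c, fun u hu => ?_, fun d => ?_⟩
  · obtain rfl | huv := eq_or_ne u v
    · simpa using hc
    · simpa [huv] using hφL u (mem_erase.2 ⟨huv, hu⟩)
  · obtain rfl | hdc := eq_or_ne d c
    · convert hvc using 2
      ext u
      obtain rfl | huv := eq_or_ne u v <;> simp [*]
    · convert hφP d using 2
      ext u
      obtain rfl | huv := eq_or_ne u v <;> simp [*, Ne.symm hdc]

end FinHypergraph

/-- in a `(P,L)`-critical hypergraph every vertex satisfies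
`d_H(v) ≥ r·|L(v)|` where `r = d(P)`. -/
theorem stmt4 (P : Set FinHypergraph) (hP : Smooth P) (r : ℕ) (hr : dP P = r)
    (H : FinHypergraph) (L : ℕ → Finset ℕ) (hcrit : Critical P H L) :
    ∀ v ∈ H.verts, r * (L v).card ≤ H.degree v := by
  intro v hv
  obtain ⟨φ, hφL, hφP⟩ := hcrit.2 v hv
  simp only [deleteVert_verts, induce_filter_deleteVert] at hφL hφP
  set S : ℕ → Finset ℕ := fun c => {u ∈ H.verts.erase v | φ u = c}
  have hr_le : ∀ c ∈ L v, r ≤ #{e ∈ H.edgesAt v | H.inc e ⊆ insert v (S c)} := by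
    intro c hc
    have hvS : v ∉ S c := by simp [S]
    obtain ⟨X, hXS, hvX, hX⟩ := hP.2.1.exists_induce_mem_critFam hv (mem_insert_self v (S c))
      (by rw [erase_insert hvS]; exact hφP c)
      (fun h => hcrit.1 (colorableWith_of_update hv hφL hφP hc h))
    calc r ≤ (H.induce X).degree v := hr ▸ dP_le_degree hX (mem_inter.2 ⟨hvX, hv⟩)
      _ ≤ _ := by
        rw [degree_induce]
        exact card_le_card (monotone_filter_right _ fun _ _ h => h.trans hXS)
  calc r * #(L v) = ∑ c ∈ L v, r := by rw [sum_const, smul_eq_mul, mul_comm]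
    _ ≤ ∑ c ∈ L v, #{e ∈ H.edgesAt v | H.inc e ⊆ insert v (S c)} := sum_le_sum hr_le
    _ ≤ H.degree v := sum_card_edgesAt_subset_insert_le_degree H v fun c _ d _ hcd =>
        disjoint_filter.2 fun _ _ hc hd => hcd (hc.symm.trans hd)
end

section
/- Let P be a smooth hypergraph property with d(P) = r ≥ 1. Then every hypergraph H satisfies χ^ℓ(H : P) ≤ Δ(H)/r + 1. -/
/-- A finite hypergraph: finite vertex set, finite edge (name) set, and an
incidence function assigning to each edge its set of endpoints (at least 2).
Edge names outside `edges` are normalized to have empty incidence. -/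
structure HGraph where
  verts : Finset ℕ
  edges : Finset ℕ
  inc : ℕ → Finset ℕ
  inc_sub : ∀ e ∈ edges, inc e ⊆ verts
  two_le_inc : ∀ e ∈ edges, 2 ≤ (inc e).card
  inc_empty : ∀ e ∉ edges, inc e = ∅

namespace HGraph

theorem inc_subset (H : HGraph) (e : ℕ) : H.inc e ⊆ H.verts := by
  by_cases h : e ∈ H.edges
  · exact H.inc_sub e h
  · rw [H.inc_empty e h]; exact Finset.empty_subset _

/-- Degree of a vertex: number of incident edges. -/
def degree (H : HGraph) (v : ℕ) : ℕ :=
  (H.edges.filter (fun e => v ∈ H.inc e)).card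

/-- The set of edges incident with `v`. -/
def edgesAt (H : HGraph) (v : ℕ) : Finset ℕ :=
  H.edges.filter (fun e => v ∈ H.inc e)

/-- Degree sum `d(H)`. -/
def degSum (H : HGraph) : ℕ := ∑ v ∈ H.verts, H.degree v

/-- Maximum degree `Δ(H)` (0 for the empty hypergraph). -/
def maxDegree (H : HGraph) : ℕ := H.verts.sup H.degree

/-- Minimum degree `δ(H)` (0 for the empty hypergraph). -/
def minDegree (H : HGraph) : ℕ :=
  if h : H.verts.Nonempty then H.verts.inf' h H.degree else 0

/-- Induced subhypergraph `H[X]`. -/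
def induce (H : HGraph) (X : Finset ℕ) : HGraph where
  verts := X ∩ H.verts
  edges := H.edges.filter (fun e => H.inc e ⊆ X ∩ H.verts)
  inc := fun e =>
    if e ∈ H.edges.filter (fun e => H.inc e ⊆ X ∩ H.verts) then H.inc e else ∅
  inc_sub := by
    intro e he
    simp only [if_pos he]
    exact (Finset.mem_filter.mp he).2
  two_le_inc := by
    intro e he
    simp only [if_pos he]
    exact H.two_le_inc e (Finset.mem_filter.mp he).1
  inc_empty := by
    intro e he
    simp only [if_neg he]

/-- The hypergraph `H(X)` obtained by shrinking `H` to `X`. -/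
def shrink (H : HGraph) (X : Finset ℕ) : HGraph where
  verts := X ∩ H.verts
  edges := H.edges.filter (fun e => 2 ≤ (H.inc e ∩ (X ∩ H.verts)).card)
  inc := fun e =>
    if e ∈ H.edges.filter (fun e => 2 ≤ (H.inc e ∩ (X ∩ H.verts)).card) then
      H.inc e ∩ (X ∩ H.verts) else ∅
  inc_sub := by
    intro e he
    simp only [if_pos he]
    exact Finset.inter_subset_right
  two_le_inc := by
    intro e he
    simp only [if_pos he]
    exact (Finset.mem_filter.mp he).2
  inc_empty := by
    intro e he
    simp only [if_neg he]

/-- `H - v`. -/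
def deleteVert (H : HGraph) (v : ℕ) : HGraph := H.induce (H.verts.erase v)

/-- The empty hypergraph `K_0`. -/
def emptyHG : HGraph :=
  ⟨∅, ∅, fun _ => ∅, fun e he => absurd he (Finset.notMem_empty e),
    fun e he => absurd he (Finset.notMem_empty e), fun _ _ => rfl⟩

/-- The one-vertex edgeless hypergraph `K_1` on vertex `v`. -/
def singleHG (v : ℕ) : HGraph :=
  ⟨{v}, ∅, fun _ => ∅, fun e he => absurd he (Finset.notMem_empty e),
    fun e he => absurd he (Finset.notMem_empty e), fun _ _ => rfl⟩

/-- Hypergraph isomorphism. -/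
def Iso (H₁ H₂ : HGraph) : Prop :=
  ∃ φ ψ : ℕ → ℕ, Set.BijOn φ ↑H₁.verts ↑H₂.verts ∧ Set.BijOn ψ ↑H₁.edges ↑H₂.edges ∧
    ∀ e ∈ H₁.edges, H₂.inc (ψ e) = (H₁.inc e).image φ

/-- A class of hypergraphs closed under isomorphism. -/
def IsoClosed (P : Set HGraph) : Prop :=
  ∀ H₁ H₂ : HGraph, Iso H₁ H₂ → H₁ ∈ P → H₂ ∈ P

/-- Hereditary: closed under induced subhypergraphs. -/
def Hereditary (P : Set HGraph) : Prop :=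
  ∀ H ∈ P, ∀ X : Finset ℕ, H.induce X ∈ P

/-- A smooth hypergraph property: isomorphism-closed, hereditary and non-trivial. -/
def Smooth (P : Set HGraph) : Prop :=
  IsoClosed P ∧ Hereditary P ∧ (∃ H ∈ P, H.verts.Nonempty) ∧ (∃ H : HGraph, H ∉ P)

/-- `F(P)`: hypergraphs not in `P` all of whose vertex-deleted subhypergraphs are in `P`. -/
def critFam (P : Set HGraph) : Set HGraph :=
  {H : HGraph | H ∉ P ∧ ∀ v ∈ H.verts, H.deleteVert v ∈ P}

/-- `d(P) = min {δ(G) : G ∈ F(P)}`. -/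
noncomputable def dP (P : Set HGraph) : ℕ := sInf (minDegree '' critFam P)

/-- Disjoint union of two hypergraphs. -/
def disjUnion (H₁ H₂ : HGraph) : HGraph where
  verts := H₁.verts ∪ H₂.verts
  edges := H₁.edges ∪ H₂.edges
  inc := fun e => H₁.inc e ∪ H₂.inc e
  inc_sub := fun e _ => Finset.union_subset_union (H₁.inc_subset e) (H₂.inc_subset e)
  two_le_inc := by
    intro e he
    rcases Finset.mem_union.mp he with h | h
    · exact le_trans (H₁.two_le_inc e h) (Finset.card_le_card Finset.subset_union_left)
    · exact le_trans (H₂.two_le_inc e h) (Finset.card_le_card Finset.subset_union_right)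
  inc_empty := by
    intro e he
    rw [Finset.mem_union] at he
    push_neg at he
    simp only [H₁.inc_empty e he.1, H₂.inc_empty e he.2, Finset.empty_union]

/-- Additive: closed under vertex-disjoint unions. -/
def Additive (P : Set HGraph) : Prop :=
  ∀ H₁ H₂ : HGraph, H₁ ∈ P → H₂ ∈ P → Disjoint H₁.verts H₂.verts →
    Disjoint H₁.edges H₂.edges → disjUnion H₁ H₂ ∈ P

/-- A `(P,L)`-coloring exists: an `L`-coloring each of whose color classes induces
a hypergraph in `P`. -/
def ColorableWith (P : Set HGraph) (H : HGraph) (L : ℕ → Finset ℕ) : Prop :=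
  ∃ φ : ℕ → ℕ, (∀ v ∈ H.verts, φ v ∈ L v) ∧
    ∀ c : ℕ, H.induce (H.verts.filter (fun v => φ v = c)) ∈ P

/-- `H` is `(P,L)`-critical. -/
def Critical (P : Set HGraph) (H : HGraph) (L : ℕ → Finset ℕ) : Prop :=
  ¬ ColorableWith P H L ∧ ∀ v ∈ H.verts, ColorableWith P (H.deleteVert v) L

/-- The `P`-list-chromatic number `χ^ℓ(H : P)`. -/
noncomputable def listChrom (P : Set HGraph) (H : HGraph) : ℕ :=
  sInf {k : ℕ | ∀ L : ℕ → Finset ℕ, (∀ v ∈ H.verts, k ≤ (L v).card) → ColorableWith P H L}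

/-- The `P`-chromatic number `χ(H : P)`. -/
noncomputable def chrom (P : Set HGraph) (H : HGraph) : ℕ :=
  sInf {k : ℕ | ∃ φ : ℕ → ℕ, (∀ v ∈ H.verts, φ v ∈ Finset.range k) ∧
    ∀ c : ℕ, H.induce (H.verts.filter (fun v => φ v = c)) ∈ P}

/-- `(χ^ℓ, P)`-critical: every proper induced subhypergraph has strictly smaller
`P`-list-chromatic number. -/
def ListCritical (P : Set HGraph) (H : HGraph) : Prop :=
  ∀ X : Finset ℕ, X ⊂ H.verts → listChrom P (H.induce X) < listChrom P H

/-- Two vertices lie in a common edge. -/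
def Adj (H : HGraph) (u v : ℕ) : Prop := ∃ e ∈ H.edges, u ∈ H.inc e ∧ v ∈ H.inc e

/-- Connectedness via hyperpaths. -/
def Connected (H : HGraph) : Prop :=
  H.verts.Nonempty ∧ ∀ u ∈ H.verts, ∀ v ∈ H.verts, Relation.ReflTransGen H.Adj u v

/-- `v` is a separating vertex of `H`. -/
def IsSepVert (H : HGraph) (v : ℕ) : Prop :=
  ∃ X Y : Finset ℕ, X ∪ Y = H.verts ∧ X ∩ Y = {v} ∧ 2 ≤ X.card ∧ 2 ≤ Y.card ∧
    ∀ e ∈ H.edges, H.inc e ⊆ X ∨ H.inc e ⊆ Y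

/-- `B` is a block of `H`: a maximal connected induced subhypergraph without
separating vertices. -/
def IsBlock (H B : HGraph) : Prop :=
  ∃ X ⊆ H.verts, B = H.induce X ∧ B.Connected ∧ (∀ v : ℕ, ¬ B.IsSepVert v) ∧
    ∀ Y : Finset ℕ, X ⊂ Y → Y ⊆ H.verts →
      ¬ ((H.induce Y).Connected ∧ ∀ v : ℕ, ¬ (H.induce Y).IsSepVert v)

/-- Multiplicity of the pair `u, v`. -/
def mult (H : HGraph) (u v : ℕ) : ℕ :=
  (H.edges.filter (fun e => H.inc e = {u, v})).card

/-- `H = tK_n`: the complete graph on `n` vertices with each edge of multiplicity `t`. -/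
def IsTK (H : HGraph) (t n : ℕ) : Prop :=
  H.verts.card = n ∧
    (∀ e ∈ H.edges, ∃ u ∈ H.verts, ∃ v ∈ H.verts, u ≠ v ∧ H.inc e = {u, v}) ∧
    ∀ u ∈ H.verts, ∀ v ∈ H.verts, u ≠ v → H.mult u v = t

/-- `H = tC_n`: the cycle on `n` vertices (ordinary edges) with each edge of
multiplicity `t`. -/
def IsTC (H : HGraph) (t n : ℕ) : Prop :=
  3 ≤ n ∧ ∃ f : ℕ → ℕ, Set.InjOn f (Set.Iio n) ∧
    H.verts = (Finset.range n).image f ∧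
    (∀ e ∈ H.edges, ∃ i < n, H.inc e = {f i, f ((i + 1) % n)}) ∧
    ∀ i < n, (H.edges.filter (fun e => H.inc e = {f i, f ((i + 1) % n)})).card = t

/-- A brick: `tC_n` with `n ≥ 3` odd, or `tK_n`. -/
def IsBrick (H : HGraph) : Prop :=
  (∃ t ≥ 1, ∃ n : ℕ, 3 ≤ n ∧ Odd n ∧ IsTC H t n) ∨ (∃ t ≥ 1, ∃ n ≥ 1, IsTK H t n)

/-- `r`-regular. -/
def IsRegular (H : HGraph) (r : ℕ) : Prop := ∀ v ∈ H.verts, H.degree v = r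

/-- Simple: no parallel edges. -/
def Simple (H : HGraph) : Prop :=
  ∀ e ∈ H.edges, ∀ e' ∈ H.edges, e ≠ e' → H.inc e ≠ H.inc e'

/-- The set `V(H, P, L)` of low vertices (for `d(P) = r`). -/
def lowVerts (H : HGraph) (L : ℕ → Finset ℕ) (r : ℕ) : Finset ℕ :=
  H.verts.filter (fun v => H.degree v = r * (L v).card)

end HGraph

open HGraph

/-!
If every vertex has degree `< d(P)·|L(v)|`, then `H` is `(P,L)`-colorable. Induct on `|V(H)|`:
colour `H - v`, and suppose every choice `c ∈ L(v)` for `v` fails. Then the colour class of `c`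
together with `v` contains a member `G_c` of `F(P)` through `v`, so `v` has degree at least
`d(P)` in `G_c`. Two classes `G_c, G_{c'}` share only `v`, and edges have at least two vertices,
so their edges at `v` are distinct, giving `deg v ≥ d(P)·|L(v)|`. Lists of size
`⌊Δ(H)/r⌋ + 1` therefore always suffice.
-/

theorem Finset.erase_filter_update {α β : Type*} [DecidableEq α] [DecidableEq β] (s : Finset α)
    (φ : α → β) (v : α) (c d : β) :
    (s.filter fun u => Function.update φ v c u = d).erase v = (s.erase v).filter (φ · = d) := by
  ext u
  by_cases huv : u = v <;> simp [huv]

namespace HGraph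

theorem ext {H₁ H₂ : HGraph} (hv : H₁.verts = H₂.verts) (he : H₁.edges = H₂.edges)
    (hi : ∀ e ∈ H₁.edges, H₁.inc e = H₂.inc e) : H₁ = H₂ := by
  have hinc : H₁.inc = H₂.inc := by
    funext e
    by_cases h : e ∈ H₁.edges
    · exact hi e h
    · rw [H₁.inc_empty e h, H₂.inc_empty e (he ▸ h)]
  cases H₁; cases H₂
  subst hv he hinc
  rfl

section Induce

variable {H : HGraph} {X Y : Finset ℕ} {e : ℕ}

@[simp]
theorem induce_verts : (H.induce X).verts = X ∩ H.verts := rfl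

theorem mem_induce_edges : e ∈ (H.induce X).edges ↔ e ∈ H.edges ∧ H.inc e ⊆ X ∩ H.verts :=
  Finset.mem_filter

theorem induce_inc_of_mem (he : e ∈ (H.induce X).edges) : (H.induce X).inc e = H.inc e :=
  if_pos he

theorem induce_induce : (H.induce Y).induce X = H.induce (X ∩ Y) := by
  have he : ((H.induce Y).induce X).edges = (H.induce (X ∩ Y)).edges := by
    ext e
    simp only [mem_induce_edges, induce_verts]
    constructor
    · rintro ⟨⟨he, heY⟩, heX⟩
      rw [induce_inc_of_mem (mem_induce_edges.mpr ⟨he, heY⟩)] at heX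
      exact ⟨he, Finset.inter_assoc X Y _ ▸ heX⟩
    · rintro ⟨he, heXY⟩
      rw [Finset.inter_assoc] at heXY
      have heY : H.inc e ⊆ Y ∩ H.verts := heXY.trans Finset.inter_subset_right
      rw [induce_inc_of_mem (mem_induce_edges.mpr ⟨he, heY⟩)]
      exact ⟨⟨he, heY⟩, heXY⟩
  refine ext (by simp only [induce_verts, Finset.inter_assoc]) he fun e hee => ?_
  rw [induce_inc_of_mem hee, induce_inc_of_mem (mem_induce_edges.mp hee).1,
    induce_inc_of_mem (he ▸ hee)]

theorem induce_induce_of_subset (h : X ⊆ Y) : (H.induce Y).induce X = H.induce X := by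
  rw [induce_induce, Finset.inter_eq_left.mpr h]

theorem induce_empty : H.induce ∅ = emptyHG := by
  have hno : (H.induce ∅).edges = ∅ := Finset.eq_empty_of_forall_notMem fun e he => by
    have h2 := ((H.induce ∅).two_le_inc e he).trans
      (Finset.card_le_card ((H.induce ∅).inc_sub e he))
    simp at h2
  exact ext (Finset.empty_inter _) hno (by simp [hno])

theorem disjoint_induce_edges (h : (X ∩ Y).card ≤ 1) :
    Disjoint (H.induce X).edges (H.induce Y).edges := by
  refine Finset.disjoint_left.mpr fun e heX heY => ?_
  obtain ⟨he, hX⟩ := mem_induce_edges.mp heX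
  have hXY : H.inc e ⊆ X ∩ Y := fun u hu =>
    Finset.mem_inter.mpr ⟨(Finset.mem_inter.mp (hX hu)).1,
      (Finset.mem_inter.mp ((mem_induce_edges.mp heY).2 hu)).1⟩
  have := (H.two_le_inc e he).trans ((Finset.card_le_card hXY).trans h)
  omega

end Induce

theorem deleteVert_verts (H : HGraph) (v : ℕ) : (H.deleteVert v).verts = H.verts.erase v :=
  Finset.inter_eq_left.mpr (Finset.erase_subset v H.verts)

theorem edgesAt_induce_subset (H : HGraph) (X : Finset ℕ) (v : ℕ) :
    (H.induce X).edgesAt v ⊆ H.edgesAt v := by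
  intro e he
  obtain ⟨heX, hv⟩ := Finset.mem_filter.mp he
  rw [induce_inc_of_mem heX] at hv
  exact Finset.mem_filter.mpr ⟨(mem_induce_edges.mp heX).1, hv⟩

theorem degree_eq_card_edgesAt (H : HGraph) (v : ℕ) : H.degree v = (H.edgesAt v).card := rfl

theorem degree_induce_le (H : HGraph) (X : Finset ℕ) (v : ℕ) :
    (H.induce X).degree v ≤ H.degree v :=
  Finset.card_le_card (H.edgesAt_induce_subset X v)

theorem sum_degree_induce_le (H : HGraph) {C : Finset ℕ} {T : ℕ → Finset ℕ}
    (hT : (C : Set ℕ).PairwiseDisjoint fun c => (H.induce (T c)).edges) (v : ℕ) :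
    ∑ c ∈ C, (H.induce (T c)).degree v ≤ H.degree v := by
  have hdisj : (C : Set ℕ).PairwiseDisjoint fun c => (H.induce (T c)).edgesAt v :=
    fun c hc c' hc' hne => (hT hc hc' hne).mono (Finset.filter_subset _ _)
      (Finset.filter_subset _ _)
  simp only [degree_eq_card_edgesAt]
  rw [← Finset.card_biUnion hdisj]
  exact Finset.card_le_card (Finset.biUnion_subset.mpr fun c _ => H.edgesAt_induce_subset _ v)

section Property

variable {P : Set HGraph}

theorem Hereditary.induce_mem_of_subset (hP : Hereditary P) {H : HGraph} {X Y : Finset ℕ}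
    (hX : H.induce X ∈ P) (hYX : Y ⊆ X) : H.induce Y ∈ P :=
  induce_induce_of_subset hYX ▸ hP _ hX Y

theorem Hereditary.emptyHG_mem (hP : Hereditary P) (hne : P.Nonempty) : emptyHG ∈ P := by
  obtain ⟨H, hH⟩ := hne
  exact induce_empty (H := H) ▸ hP H hH ∅

theorem exists_subset_induce_mem_critFam (H : HGraph) {S : Finset ℕ} (hS : H.induce S ∉ P) :
    ∃ T ⊆ S, H.induce T ∈ critFam P := by
  induction S using Finset.strongInduction with
  | H S ih =>
    by_cases hall : ∀ v ∈ (H.induce S).verts, (H.induce S).deleteVert v ∈ P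
    · exact ⟨S, subset_rfl, hS, hall⟩
    push Not at hall
    obtain ⟨v, hv, hdel⟩ := hall
    have hvS : v ∈ S := (Finset.mem_inter.mp hv).1
    rw [deleteVert, induce_induce, induce_verts] at hdel
    have hsub : (S ∩ H.verts).erase v ∩ S ⊂ S :=
      ⟨Finset.inter_subset_right, fun h => by simpa using h hvS⟩
    obtain ⟨T, hTsub, hT⟩ := ih _ hsub hdel
    exact ⟨T, hTsub.trans hsub.subset, hT⟩

theorem dP_le_degree_of_mem_critFam {G : HGraph} (hG : G ∈ critFam P) {v : ℕ}
    (hv : v ∈ G.verts) : dP P ≤ G.degree v := by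
  refine (Nat.sInf_le (Set.mem_image_of_mem minDegree hG)).trans ?_
  rw [minDegree, dif_pos ⟨v, hv⟩]
  exact Finset.inf'_le _ hv

theorem colorableWith_of_verts_eq_empty (hP : Hereditary P) (hne : P.Nonempty) {H : HGraph}
    (hH : H.verts = ∅) (L : ℕ → Finset ℕ) : ColorableWith P H L :=
  ⟨fun _ => 0, by simp [hH], fun _ => by
    rw [hH, Finset.filter_empty, induce_empty]
    exact hP.emptyHG_mem hne⟩

theorem exists_critFam_of_not_colorableWith_update (hP : Hereditary P) {H : HGraph}
    {L : ℕ → Finset ℕ} (hH : ¬ ColorableWith P H L) {v : ℕ} {φ : ℕ → ℕ}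
    (hφL : ∀ u ∈ (H.deleteVert v).verts, φ u ∈ L u)
    (hφP : ∀ d, (H.deleteVert v).induce ((H.deleteVert v).verts.filter (φ · = d)) ∈ P)
    {c : ℕ} (hc : c ∈ L v) :
    ∃ T ⊆ H.verts.filter (fun u => Function.update φ v c u = c),
      v ∈ T ∧ H.induce T ∈ critFam P := by
  rw [deleteVert_verts] at hφL hφP
  have hclass (d : ℕ) : H.induce ((H.verts.erase v).filter (φ · = d)) ∈ P := by
    simpa only [deleteVert, induce_induce_of_subset (Finset.filter_subset _ _)] using hφP d
  have hψL : ∀ u ∈ H.verts, Function.update φ v c u ∈ L u := fun u hu => by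
    by_cases huv : u = v
    · simpa [huv] using hc
    · simpa [huv] using hφL u (Finset.mem_erase.mpr ⟨huv, hu⟩)
  obtain ⟨d, hd⟩ : ∃ d, H.induce (H.verts.filter (Function.update φ v c · = d)) ∉ P := by
    by_contra! h
    exact hH ⟨_, hψL, h⟩
  obtain rfl : d = c := by
    by_contra hdc
    have hvd : v ∉ H.verts.filter (Function.update φ v c · = d) := by simp [Ne.symm hdc]
    refine hd ?_
    rw [← Finset.erase_eq_of_notMem hvd, Finset.erase_filter_update]
    exact hclass d
  obtain ⟨T, hT, hTcrit⟩ := exists_subset_induce_mem_critFam H hd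
  refine ⟨T, hT, by_contra fun hvT => hTcrit.1 (hP.induce_mem_of_subset (hclass d) ?_), hTcrit⟩
  rw [← Finset.erase_filter_update]
  exact Finset.subset_erase.mpr ⟨hT, hvT⟩

theorem colorableWith_of_degree_lt (hP : Hereditary P) (hne : P.Nonempty) (H : HGraph)
    (L : ℕ → Finset ℕ) (hdeg : ∀ v ∈ H.verts, H.degree v < dP P * (L v).card) :
    ColorableWith P H L := by
  rcases H.verts.eq_empty_or_nonempty with hH | ⟨v, hv⟩
  · exact colorableWith_of_verts_eq_empty hP hne hH L
  have hcard : (H.deleteVert v).verts.card < H.verts.card := by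
    rw [deleteVert_verts]
    exact Finset.card_erase_lt_of_mem hv
  obtain ⟨φ, hφL, hφP⟩ := colorableWith_of_degree_lt hP hne (H.deleteVert v) L fun u hu =>
    (degree_induce_le _ _ u).trans_lt
      (hdeg u (Finset.mem_of_mem_erase (deleteVert_verts H v ▸ hu)))
  by_contra hH
  choose! T hTsub hvT hTcrit using fun c (hc : c ∈ L v) =>
    exists_critFam_of_not_colorableWith_update hP hH hφL hφP hc
  -- The classes of distinct colours `c, c'` (each with `v` recoloured) meet only in `v`.
  have hdisj : (L v : Set ℕ).PairwiseDisjoint fun c => (H.induce (T c)).edges := by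
    intro c hc c' hc' hcc'
    refine disjoint_induce_edges ((Finset.card_le_card fun u hu => ?_).trans
      (Finset.card_singleton v).le)
    obtain ⟨hu, hu'⟩ := Finset.mem_inter.mp hu
    have h := (Finset.mem_filter.mp (hTsub c hc hu)).2
    have h' := (Finset.mem_filter.mp (hTsub c' hc' hu')).2
    rw [Finset.mem_singleton]
    by_contra huv
    rw [Function.update_of_ne huv] at h h'
    exact hcc' (h.symm.trans h')
  have hsum : dP P * (L v).card ≤ H.degree v := calc
    dP P * (L v).card = ∑ _c ∈ L v, dP P := by rw [Finset.sum_const, smul_eq_mul, mul_comm]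
    _ ≤ ∑ c ∈ L v, (H.induce (T c)).degree v := Finset.sum_le_sum fun c hc =>
      dP_le_degree_of_mem_critFam (hTcrit c hc) (by simp [hvT c hc, hv])
    _ ≤ H.degree v := H.sum_degree_induce_le hdisj v
  exact (hdeg v hv).not_ge hsum
termination_by H.verts.card

end Property

end HGraph

/-- `χ^ℓ(H:P) ≤ Δ(H)/r + 1`. -/
theorem stmt10 (P : Set HGraph) (hP : Smooth P) (r : ℕ) (hr : dP P = r)
    (hr1 : 1 ≤ r) (H : HGraph) :
    (listChrom P H : ℚ) ≤ (H.maxDegree : ℚ) / (r : ℚ) + 1 := by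
  obtain ⟨-, hHer, ⟨G, hG, -⟩, -⟩ := hP
  have hlist : listChrom P H ≤ H.maxDegree / r + 1 := Nat.sInf_le fun L hL =>
    colorableWith_of_degree_lt hHer ⟨G, hG⟩ H L fun v hv => calc
      H.degree v ≤ H.maxDegree := Finset.le_sup hv
      _ < r * (H.maxDegree / r + 1) := Nat.lt_mul_div_succ _ hr1
      _ ≤ dP P * (L v).card := hr ▸ Nat.mul_le_mul_left r (hL v hv)
  calc (listChrom P H : ℚ) ≤ ((H.maxDegree / r : ℕ) : ℚ) + 1 := by exact_mod_cast hlist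
    _ ≤ H.maxDegree / r + 1 := by grw [Nat.cast_div_le]
end
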